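/- The set of reals T ∈ (0,1) such that T is not computable and Z(T) is not strongly predictable has Lebesgue measure 1 in (0,1). -/

import Mathlib

/-- The first `n` bits of the infinite binary sequence `X` (as a finite binary string). -/
def pre (X : ℕ → Bool) (n : ℕ) : List Bool := (List.range n).map X

/-- A martingale: nonnegative betting strategy with the fairness condition. -/
def IsMartingale (B : List Bool → ℝ) : Prop :=
  (∀ x, 0 ≤ B x) ∧ ∀ x, B (x ++ [false]) + B (x ++ [true]) = 2 * B x

/-- `B` succeeds on `X`: the capital along `X` is unbounded. -/
def Succeeds (B : List Bool → ℝ) (X : ℕ → Bool) : Prop := ∀ C : ℝ, ∃ n, C < B (pre X n)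

/-- A computable martingale: `{(x,q) | q < B x}` is decidable. -/
def ComputableMartingale (B : List Bool → ℝ) : Prop :=
  IsMartingale B ∧ ∃ g : List Bool × ℚ → Bool, Computable g ∧
    ∀ p : List Bool × ℚ, g p = true ↔ (p.2 : ℝ) < B p.1

def ComputablyRandom (X : ℕ → Bool) : Prop :=
  ∀ B : List Bool → ℝ, ComputableMartingale B → ¬ Succeeds B X

def TotalStronglyPredictable (X : ℕ → Bool) : Prop :=
  ∃ F : List Bool → Option Bool, Computable F ∧
    (∀ n b, F (pre X n) = some b → b = X n) ∧
    {n : ℕ | F (pre X n) ≠ none}.Infinite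

def StronglyPredictable (X : ℕ → Bool) : Prop :=
  ∃ F : List Bool →. Option Bool, Partrec F ∧
    (∀ n, (F (pre X n)).Dom) ∧
    (∀ n b, some b ∈ F (pre X n) → b = X n) ∧
    {n : ℕ | ∃ b, some b ∈ F (pre X n)}.Infinite

def PartialComputableMartingale (B : List Bool →. ℚ) : Prop :=
  Partrec B ∧
  (∀ x q, q ∈ B x → 0 ≤ q) ∧
  (∀ x y : List Bool, x <+: y → (B y).Dom → (B x).Dom) ∧
  (∀ x : List Bool, (B x).Dom → ((B (x ++ [false])).Dom ↔ (B (x ++ [true])).Dom)) ∧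
  (∀ (x : List Bool) (q q₀ q₁ : ℚ), q ∈ B x → q₀ ∈ B (x ++ [false]) → q₁ ∈ B (x ++ [true]) →
    q₀ + q₁ = 2 * q)

def PSucceeds (B : List Bool →. ℚ) (X : ℕ → Bool) : Prop :=
  (∀ n, (B (pre X n)).Dom) ∧ ∀ C : ℚ, ∃ n, ∃ q ∈ B (pre X n), C < q

def PartialComputablyRandom (X : ℕ → Bool) : Prop :=
  ∀ B : List Bool →. ℚ, PartialComputableMartingale B → ¬ PSucceeds B X

def FiniteStateStronglyPredictable (X : ℕ → Bool) : Prop :=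
  ∃ (Q : Type) (_ : Fintype Q) (δ : Q → Bool → Q) (q₀ : Q) (f : Q → Option Bool),
    (∀ n b, f ((pre X n).foldl δ q₀) = some b → b = X n) ∧
    {n : ℕ | f ((pre X n).foldl δ q₀) ≠ none}.Infinite

/-- A prefix-free machine: a partial computable function with prefix-free domain. -/
def IsPrefixFreeMachine (M : List Bool →. List Bool) : Prop :=
  Partrec M ∧ ∀ p q : List Bool, (M p).Dom → (M q).Dom → p <+: q → p = q

/-- An optimal prefix-free machine. -/
def IsOptimalMachine (U : List Bool →. List Bool) : Prop :=
  IsPrefixFreeMachine U ∧ ∀ M : List Bool →. List Bool, IsPrefixFreeMachine M →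
    ∃ d : ℕ, ∀ p : List Bool, (M p).Dom →
      ∃ q : List Bool, q.length ≤ p.length + d ∧ U q = M p

/-- Program-size (Kolmogorov) complexity of `x` with respect to `U`. -/
noncomputable def KC (U : List Bool →. List Bool) (x : List Bool) : ℕ :=
  sInf {n : ℕ | ∃ p : List Bool, p.length = n ∧ x ∈ U p}

/-- The partition function `Z(T)` of `U` at temperature `T`. -/
noncomputable def ZT (U : List Bool →. List Bool) (T : ℝ) : ℝ :=
  ∑' p : {p : List Bool // (U p).Dom}, (2 : ℝ) ^ (-((p.1.length : ℝ)) / T)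

/-- Chaitin's Ω number of `U`. -/
noncomputable def Omega (U : List Bool →. List Bool) : ℝ :=
  ∑' p : {p : List Bool // (U p).Dom}, (2 : ℝ) ^ (-((p.1.length : ℝ)))

/-- The `n`-th bit (0-indexed) of the base-two expansion (with infinitely many zeros)
of the fractional part of `α`. -/
noncomputable def binDigit (α : ℝ) (n : ℕ) : Bool :=
  decide (⌊α * 2 ^ (n + 1)⌋ % 2 = 1)

def ComputableReal (T : ℝ) : Prop :=
  ∃ f : ℕ → ℚ, Computable f ∧ ∀ n : ℕ, |T - (f n : ℝ)| < (2 : ℝ) ^ (-(n : ℤ))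

def WeaklyChaitinRandom (U : List Bool →. List Bool) (X : ℕ → Bool) : Prop :=
  ∃ c : ℕ, ∀ n : ℕ, 1 ≤ n → (n : ℤ) - c ≤ (KC U (pre X n) : ℤ)

def WeaklyChaitinTRandom (U : List Bool →. List Bool) (T : ℝ) (X : ℕ → Bool) : Prop :=
  ∃ c : ℕ, ∀ n : ℕ, 1 ≤ n → T * n - c ≤ (KC U (pre X n) : ℝ)

def StrictlyTCompressible (U : List Bool →. List Bool) (T : ℝ) (X : ℕ → Bool) : Prop :=
  ∃ d : ℕ, ∀ n : ℕ, 1 ≤ n → (KC U (pre X n) : ℝ) ≤ T * n + d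

def StrictlyChaitinTRandom (U : List Bool →. List Bool) (T : ℝ) (X : ℕ → Bool) : Prop :=
  WeaklyChaitinTRandom U T X ∧ StrictlyTCompressible U T X


namespace ZAux
open MeasureTheory Pointwise


theorem pre_length (X : ℕ → Bool) (n : ℕ) : (pre X n).length = n := by
  simp [pre]

theorem pre_succ (X : ℕ → Bool) (n : ℕ) : pre X (n + 1) = pre X n ++ [X n] := by
  simp [pre, List.range_succ]

theorem pre_take (X : ℕ → Bool) {m n : ℕ} (h : m ≤ n) : (pre X n).take m = pre X m := by
  simp [pre, ← List.map_take, List.take_range, Nat.min_eq_left h]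

/-- value of a binary string, big-endian -/
def N (x : List Bool) : ℕ := x.foldl (fun a b => 2 * a + cond b 1 0) 0

theorem N_concat (y : List Bool) (b : Bool) : N (y ++ [b]) = 2 * N y + cond b 1 0 := by
  simp [N, List.foldl_append]

theorem N_lt (x : List Bool) : N x < 2 ^ x.length := by
  induction x using List.reverseRecOn with
  | nil => simp [N]
  | append_singleton y b ih =>
    rw [N_concat]
    simp only [List.length_append, List.length_singleton]
    have : cond b 1 0 ≤ 1 := by cases b <;> simp
    calc 2 * N y + cond b 1 0 ≤ 2 * N y + 1 := by omega
    _ < 2 ^ (y.length + 1) := by rw [pow_succ]; omega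

theorem N_inj : ∀ n : ℕ, ∀ x y : List Bool, x.length = n → y.length = n → N x = N y → x = y := by
  intro n
  induction n with
  | zero => intro x y hx hy _; rw [List.length_eq_zero_iff] at hx hy; rw [hx, hy]
  | succ n ih =>
    intro x y hx hy hN
    rcases x.eq_nil_or_concat with rfl | ⟨x', b, rfl⟩
    · exact absurd hx (by simp)
    rcases y.eq_nil_or_concat with rfl | ⟨y', c, rfl⟩
    · exact absurd hy (by simp)
    simp only [List.concat_eq_append] at hx hy hN ⊢
    have hx' : x'.length = n := by simp at hx; omega
    have hy' : y'.length = n := by simp at hy; omega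
    rw [N_concat, N_concat] at hN
    have hbc : b = c := by
      rcases b <;> rcases c <;> simp at hN ⊢ <;> omega
    subst hbc
    have : N x' = N y' := by rcases b <;> simp at hN <;> omega
    rw [ih x' y' hx' hy' this]

theorem floor_eq_N {α : ℝ} (h0 : 0 ≤ α) (h1 : α < 1) (n : ℕ) :
    ⌊α * 2 ^ n⌋ = (N (pre (binDigit α) n) : ℤ) := by
  induction n with
  | zero => simp [pre, N, Int.floor_eq_zero_iff, h0, h1]
  | succ n ih =>
    set X := binDigit α
    have h2n : (0:ℝ) < 2 ^ n := by positivity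
    set a : ℤ := (N (pre X n) : ℤ) with ha
    have key : α * 2 ^ (n+1) = 2 * (α * 2 ^ n) := by ring
    have hlow : (2 * a : ℤ) ≤ ⌊α * 2 ^ (n+1)⌋ := by
      rw [Int.le_floor, key]
      push_cast
      have := (Int.floor_le (α * 2 ^ n))
      rw [ih] at this
      push_cast at this
      linarith
    have hhigh : ⌊α * 2 ^ (n+1)⌋ < 2 * a + 2 := by
      rw [Int.floor_lt, key]
      push_cast
      have := Int.lt_floor_add_one (α * 2 ^ n)
      rw [ih] at this
      push_cast at this
      linarith
    have hXn : X n = decide (⌊α * 2 ^ (n+1)⌋ % 2 = 1) := rfl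
    rw [pre_succ, N_concat]
    rcases (by omega : ⌊α * 2 ^ (n+1)⌋ = 2*a ∨ ⌊α * 2 ^ (n+1)⌋ = 2*a+1) with hfl | hfl
    · have hx : X n = false := by rw [hXn, hfl]; simp
      rw [hx]; simp only [Bool.cond_false, Nat.add_zero]
      rw [hfl, ha]; push_cast; ring
    · have hx : X n = true := by rw [hXn, hfl]; simp
      rw [hx]; simp only [Bool.cond_true]
      rw [hfl, ha]; push_cast; ring

/-- the dyadic set of reals whose first digits are x -/
def E (x : List Bool) : Set ℝ := {α | α ∈ Set.Ico (0:ℝ) 1 ∧ pre (binDigit α) x.length = x}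

theorem E_eq (x : List Bool) :
    E x = Set.Ico ((N x : ℝ) / 2 ^ x.length) (((N x : ℝ) + 1) / 2 ^ x.length) := by
  ext α
  have h2n : (0:ℝ) < 2 ^ x.length := by positivity
  constructor
  · rintro ⟨⟨h0, h1⟩, hpre⟩
    have := floor_eq_N h0 h1 x.length
    rw [hpre] at this
    rw [Int.floor_eq_iff] at this
    · constructor
      · rw [div_le_iff₀ h2n]; push_cast at this ⊢; linarith [this.1]
      · rw [lt_div_iff₀ h2n]; push_cast at this ⊢; linarith [this.2]
  · rintro ⟨hl, hr⟩
    have hN1 : (N x : ℝ) + 1 ≤ 2 ^ x.length := by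
      have := N_lt x
      have : (N x : ℝ) + 1 ≤ (2:ℝ) ^ x.length := by exact_mod_cast Nat.succ_le_of_lt this
      linarith
    have h0 : 0 ≤ α := le_trans (by positivity) hl
    have h1 : α < 1 := lt_of_lt_of_le hr (by rw [div_le_one h2n]; linarith)
    refine ⟨⟨h0, h1⟩, ?_⟩
    have hfl : ⌊α * 2 ^ x.length⌋ = (N x : ℤ) := by
      rw [Int.floor_eq_iff]
      constructor
      · push_cast; rw [div_le_iff₀ h2n] at hl; linarith
      · push_cast; rw [lt_div_iff₀ h2n] at hr; linarith
    have := floor_eq_N h0 h1 x.length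
    rw [hfl] at this
    exact N_inj x.length _ x (pre_length _ _) rfl (by exact_mod_cast this.symm)

theorem E_volume (x : List Bool) :
    MeasureTheory.volume (E x) = ENNReal.ofReal ((2 : ℝ) ^ x.length)⁻¹ := by
  rw [E_eq, Real.volume_Ico]
  congr 1
  field_simp
  ring

theorem E_measurable (x : List Bool) : MeasurableSet (E x) := by
  rw [E_eq]; exact measurableSet_Ico

theorem E_subset_Ico (x : List Bool) : E x ⊆ Set.Ico (0:ℝ) 1 := fun _ h => h.1

/-- membership in E from digit prefix -/
theorem mem_E {α : ℝ} (h0 : 0 ≤ α) (h1 : α < 1) (n : ℕ) :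
    α ∈ E (pre (binDigit α) n) := ⟨⟨h0, h1⟩, by rw [pre_length]⟩

theorem E_subset_of_prefix {x y : List Bool} (h : x <+: y) : E y ⊆ E x := by
  rintro α ⟨hα, hpre⟩
  refine ⟨hα, ?_⟩
  obtain ⟨t, rfl⟩ := h
  have hlen : x.length ≤ (x ++ t).length := by simp
  rw [← pre_take (binDigit α) hlen, hpre]
  simp

theorem prefix_of_mem_E {x y : List Bool} {α : ℝ} (hx : α ∈ E x) (hy : α ∈ E y)
    (h : x.length ≤ y.length) : x <+: y := by
  rw [← hx.2, ← hy.2, ← pre_take (binDigit α) h]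
  exact List.take_prefix _ _


section Predictor
variable (G : List Bool → Option Bool)

/-- consistency of a string with predictor G -/
def GCon (x : List Bool) : Prop :=
  ∀ j, j < x.length → ∀ b, G (x.take j) = some b → x.take (j + 1) = x.take j ++ [b]

/-- number of prediction positions among proper prefixes -/
def pc (x : List Bool) : ℕ :=
  ((List.range x.length).filter fun j => (G (x.take j)).isSome).length

def BadX (X : ℕ → Bool) : Prop :=
  (∀ n b, G (pre X n) = some b → b = X n) ∧ {n | (G (pre X n)).isSome}.Infinite

theorem take_of_prefix {y x : List Bool} (h : y <+: x) {j : ℕ} (hj : j ≤ y.length) :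
    x.take j = y.take j := by
  obtain ⟨t, rfl⟩ := h
  exact List.take_append_of_le_length hj

theorem GCon_prefix {x y : List Bool} (hx : GCon G x) (h : y <+: x) : GCon G y := by
  intro j hj b hGb
  have hj1 : j + 1 ≤ y.length := hj
  have e1 : x.take j = y.take j := take_of_prefix h (le_of_lt hj)
  have e2 : x.take (j+1) = y.take (j+1) := take_of_prefix h hj1
  have := hx j (lt_of_lt_of_le hj (h.length_le)) b (by rw [e1]; exact hGb)
  rw [e2, e1] at this
  exact this

theorem pc_concat (y : List Bool) (b : Bool) :
    pc G (y ++ [b]) = pc G y + (if (G y).isSome then 1 else 0) := by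
  unfold pc
  simp only [List.length_append, List.length_singleton]
  rw [List.range_succ, List.filter_append]
  rw [List.length_append]
  congr 1
  · congr 1
    apply List.filter_congr
    intro j hj
    rw [List.mem_range] at hj
    rw [List.take_append_of_le_length (le_of_lt hj)]
  · have hty : (y ++ [b]).take y.length = y := by
      simpa using List.take_append_of_le_length (le_refl y.length)
    simp only [List.filter_singleton, hty]
    by_cases h : (G y).isSome <;> simp [h]

theorem pc_prefix_le (t y : List Bool) : pc G y ≤ pc G (y ++ t) := by
  induction t using List.reverseRecOn with
  | nil => simp
  | append_singleton s b ih =>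
    calc pc G y ≤ pc G (y ++ s) := ih
    _ ≤ pc G (y ++ (s ++ [b])) := by
        rw [← List.append_assoc, pc_concat]; omega

/-- existence of the last prediction position -/
theorem exists_last_pred {z : List Bool} (hz : 1 ≤ pc G z) :
    ∃ j < z.length, pc G (z.take j) = pc G z - 1 ∧ (G (z.take j)).isSome := by
  induction z using List.reverseRecOn with
  | nil => simp [pc] at hz
  | append_singleton y c ih =>
    rw [pc_concat] at hz ⊢
    by_cases h : (G y).isSome
    · refine ⟨y.length, by simp, ?_, ?_⟩
      · have : (y ++ [c]).take y.length = y := by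
          simpa using List.take_append_of_le_length (le_refl y.length)
        rw [this]; simp [h]
      · have : (y ++ [c]).take y.length = y := by
          simpa using List.take_append_of_le_length (le_refl y.length)
        rw [this]; exact h
    · simp only [h, if_false, Nat.add_zero] at hz ⊢
      obtain ⟨j, hj, h1, h2⟩ := ih hz
      refine ⟨j, by simp; omega, ?_, ?_⟩
      · rw [take_of_prefix (List.prefix_append y [c]) (le_of_lt hj)]; exact h1
      · rw [take_of_prefix (List.prefix_append y [c]) (le_of_lt hj)]; exact h2


/-- strings ready to predict, with exactly k predictions so far -/
def ZSet (k : ℕ) : Set (List Bool) := {z | GCon G z ∧ pc G z = k ∧ (G z).isSome}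

/-- extend a string by its predicted bit -/
def ext (z : List Bool) : List Bool := z ++ [(G z).iget]

theorem ZSet_prefix_free {k : ℕ} {z₁ z₂ : List Bool} (h1 : z₁ ∈ ZSet G k)
    (h2 : z₂ ∈ ZSet G k) (hp : z₁ <+: z₂) : z₁ = z₂ := by
  by_contra hne
  obtain ⟨t, rfl⟩ := hp
  have ht : t ≠ [] := by rintro rfl; simp at hne
  obtain ⟨c, r, rfl⟩ := List.exists_cons_of_ne_nil ht
  have key : pc G z₁ + 1 ≤ pc G (z₁ ++ (c :: r)) := by
    have e : z₁ ++ (c :: r) = (z₁ ++ [c]) ++ r := by simp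
    rw [e]
    calc pc G z₁ + 1 = pc G (z₁ ++ [c]) := by rw [pc_concat, if_pos h1.2.2]
    _ ≤ pc G ((z₁ ++ [c]) ++ r) := pc_prefix_le G r _
  rw [h1.2.1, h2.2.1] at key
  omega

/-- the union at stage k -/
noncomputable def mu (k : ℕ) : ENNReal := volume (⋃ z ∈ ZSet G k, E (ext G z))

theorem ext_E_disjoint {k : ℕ} : (ZSet G k).PairwiseDisjoint (fun z => E (ext G z)) := by
  intro z₁ h1 z₂ h2 hne
  rw [Function.onFun, Set.disjoint_left]
  intro α hα1 hα2
  apply hne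
  have hlen : ∀ z : List Bool, (ext G z).length = z.length + 1 := by intro z; simp [ext]
  rcases le_total z₁.length z₂.length with h | h
  · have hp : ext G z₁ <+: ext G z₂ := prefix_of_mem_E hα1 hα2 (by have := hlen z₁; have := hlen z₂; omega)
    have : z₁ <+: z₂ := by
      have h1' : z₁ <+: ext G z₂ := (List.prefix_append _ _).trans hp
      have := List.prefix_of_prefix_length_le h1' (List.prefix_append z₂ _) (by have := hlen z₁; have := hlen z₂; omega)
      exact this
    exact ZSet_prefix_free G h1 h2 this
  · have hp : ext G z₂ <+: ext G z₁ := prefix_of_mem_E hα2 hα1 (by have := hlen z₁; have := hlen z₂; omega)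
    have : z₂ <+: z₁ := by
      have h1' : z₂ <+: ext G z₁ := (List.prefix_append _ _).trans hp
      exact List.prefix_of_prefix_length_le h1' (List.prefix_append z₁ _) (by have := hlen z₁; have := hlen z₂; omega)
    exact (ZSet_prefix_free G h2 h1 this).symm

theorem Z_E_disjoint {k : ℕ} : (ZSet G k).PairwiseDisjoint (fun z => E z) := by
  intro z₁ h1 z₂ h2 hne
  rw [Function.onFun, Set.disjoint_left]
  intro α hα1 hα2
  apply hne
  rcases le_total z₁.length z₂.length with h | h
  · exact ZSet_prefix_free G h1 h2 (prefix_of_mem_E hα1 hα2 h)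
  · exact (ZSet_prefix_free G h2 h1 (prefix_of_mem_E hα2 hα1 h)).symm

theorem ZSet_countable (k : ℕ) : (ZSet G k).Countable := Set.to_countable _

theorem mu_eq (k : ℕ) :
    mu G k = 2⁻¹ * volume (⋃ z ∈ ZSet G k, E z) := by
  unfold mu
  rw [measure_biUnion (ZSet_countable G k) (ext_E_disjoint G) (fun z _ => E_measurable _)]
  rw [measure_biUnion (ZSet_countable G k) (Z_E_disjoint G) (fun z _ => E_measurable _)]
  rw [← ENNReal.tsum_mul_left]
  congr 1
  funext z
  rw [E_volume, E_volume]
  have : ((2:ℝ) ^ (ext G z.1).length)⁻¹ = 2⁻¹ * ((2:ℝ) ^ (z.1).length)⁻¹ := by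
    have : (ext G z.1).length = z.1.length + 1 := by simp [ext]
    rw [this, pow_succ]
    field_simp
  rw [this, ENNReal.ofReal_mul (by norm_num)]
  congr 1
  rw [ENNReal.ofReal_inv_of_pos (by norm_num : (0:ℝ) < 2)]
  norm_num

theorem cover_step (k : ℕ) :
    (⋃ z ∈ ZSet G (k+1), E z) ⊆ ⋃ z ∈ ZSet G k, E (ext G z) := by
  intro α hα
  simp only [Set.mem_iUnion] at hα ⊢
  obtain ⟨z, hz, hαz⟩ := hα
  obtain ⟨j, hj, h1, h2⟩ := exists_last_pred G (by rw [hz.2.1]; omega)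
  rw [hz.2.1] at h1
  refine ⟨z.take j, ⟨GCon_prefix G hz.1 (List.take_prefix _ _), by simpa using h1, h2⟩, ?_⟩
  obtain ⟨b, hb⟩ := Option.isSome_iff_exists.mp h2
  have hext : ext G (z.take j) = z.take (j+1) := by
    rw [ext, hb, Option.iget_some, ← hz.1 j hj b hb]
  rw [hext]
  exact E_subset_of_prefix (List.take_prefix _ _) hαz

theorem mu_succ_le (k : ℕ) : mu G (k+1) ≤ 2⁻¹ * mu G k := by
  rw [mu_eq]
  exact mul_le_mul_right (measure_mono (cover_step G k)) _

theorem mu_zero_le : mu G 0 ≤ 2⁻¹ := by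
  rw [mu_eq]
  calc 2⁻¹ * volume (⋃ z ∈ ZSet G 0, E z) ≤ 2⁻¹ * volume (Set.Ico (0:ℝ) 1) := by
        apply mul_le_mul_right
        apply measure_mono
        exact Set.iUnion₂_subset fun z _ => E_subset_Ico z
  _ = 2⁻¹ := by rw [Real.volume_Ico]; norm_num

theorem mu_le (k : ℕ) : mu G k ≤ 2⁻¹ ^ (k+1) := by
  induction k with
  | zero => simpa using mu_zero_le G
  | succ k ih =>
    calc mu G (k+1) ≤ 2⁻¹ * mu G k := mu_succ_le G k
    _ ≤ 2⁻¹ * 2⁻¹ ^ (k+1) := mul_le_mul_right ih _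
    _ = 2⁻¹ ^ (k+2) := by ring

/-- Bad α's are in every stage union -/
theorem bad_mem_stage {α : ℝ} (h0 : 0 ≤ α) (h1 : α < 1)
    (hb : BadX G (binDigit α)) (k : ℕ) : α ∈ ⋃ z ∈ ZSet G k, E (ext G z) := by
  set X := binDigit α with hX
  obtain ⟨hcor, hinf⟩ := hb
  -- pc of pre X n counts prediction positions
  have hpcpre : ∀ n, pc G (pre X n) = ((List.range n).filter fun j => (G (pre X j)).isSome).length := by
    intro n
    unfold pc
    rw [pre_length]
    congr 1
    apply List.filter_congr
    intro j hj
    rw [List.mem_range] at hj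
    rw [pre_take X (le_of_lt hj)]
  have hstep : ∀ n, pc G (pre X (n+1)) = pc G (pre X n) + (if (G (pre X n)).isSome then 1 else 0) := by
    intro n; rw [pre_succ, pc_concat]
  have hmono : Monotone (fun n => pc G (pre X n)) := by
    apply monotone_nat_of_le_succ
    intro n; rw [hstep]; omega
  -- unboundedness
  have hunb : ∀ m, ∃ n, m < pc G (pre X n) := by
    intro m
    induction m with
    | zero =>
      obtain ⟨n, hn, -⟩ := hinf.exists_gt 0
      simp only [Set.mem_setOf_eq] at hn
      exact ⟨n+1, by rw [hstep, if_pos hn]; omega⟩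
    | succ m ih =>
      obtain ⟨n, hn⟩ := ih
      obtain ⟨n', hn', hgt⟩ := hinf.exists_gt n
      simp only [Set.mem_setOf_eq] at hn'
      refine ⟨n'+1, ?_⟩
      rw [hstep, if_pos hn']
      have := hmono (le_of_lt hgt)
      simp only at this
      omega
  -- find the k-th prediction time
  have hex : ∃ m, k < pc G (pre X m) := hunb k
  have hmlt : k < pc G (pre X (Nat.find hex)) := Nat.find_spec hex
  have hmpos : Nat.find hex ≠ 0 := by
    intro h
    rw [h] at hmlt
    have : pc G (pre X 0) = 0 := by simp [pc, pre_length]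
    omega
  obtain ⟨n, hn⟩ : ∃ n, Nat.find hex = n + 1 := ⟨Nat.find hex - 1, by omega⟩
  rw [hn] at hmlt
  have hnle : ¬ k < pc G (pre X n) := Nat.find_min hex (by omega)
  rw [hstep] at hmlt
  have hsome : (G (pre X n)).isSome := by
    by_contra h
    rw [if_neg h] at hmlt
    omega
  have hpck : pc G (pre X n) = k := by
    rw [if_pos hsome] at hmlt
    omega
  -- pre X n ∈ ZSet G k
  have hCon : GCon G (pre X n) := by
    intro j hj b hGb
    rw [pre_length] at hj
    rw [pre_take X (le_of_lt hj)] at hGb ⊢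
    rw [pre_take X hj, pre_succ]
    rw [hcor j b hGb]
  simp only [Set.mem_iUnion]
  refine ⟨pre X n, ⟨hCon, hpck, hsome⟩, ?_⟩
  obtain ⟨b, hb⟩ := Option.isSome_iff_exists.mp hsome
  have : ext G (pre X n) = pre X (n+1) := by
    rw [ext, hb, Option.iget_some, pre_succ, hcor n b hb]
  rw [this]
  exact mem_E h0 h1 (n+1)

/-- main measure-zero lemma on [0,1) for a total predictor -/
theorem badX_null_Ico :
    volume {α : ℝ | α ∈ Set.Ico (0:ℝ) 1 ∧ BadX G (binDigit α)} = 0 := by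
  by_contra hne
  obtain ⟨n, hn⟩ := ENNReal.exists_inv_two_pow_lt hne
  have hsub : {α : ℝ | α ∈ Set.Ico (0:ℝ) 1 ∧ BadX G (binDigit α)} ⊆
      ⋃ z ∈ ZSet G n, E (ext G z) := by
    rintro α ⟨⟨h0, h1⟩, hb⟩
    exact bad_mem_stage G h0 h1 hb n
  have h2 : volume {α : ℝ | α ∈ Set.Ico (0:ℝ) 1 ∧ BadX G (binDigit α)} ≤ 2⁻¹ ^ (n+1) :=
    le_trans (measure_mono (μ := volume) hsub) (mu_le G n)
  have h3 : (2:ENNReal)⁻¹ ^ (n+1) ≤ 2⁻¹ ^ n := by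
    rw [pow_succ]
    calc (2:ENNReal)⁻¹ ^ n * 2⁻¹ ≤ 2⁻¹ ^ n * 1 := by
          apply mul_le_mul_right; norm_num
    _ = 2⁻¹ ^ n := by ring
  exact absurd (lt_of_le_of_lt (le_trans h2 h3) hn) (lt_irrefl _)

end Predictor

theorem binDigit_intCast_add (m : ℤ) (α : ℝ) (n : ℕ) :
    binDigit ((m : ℝ) + α) n = binDigit α n := by
  unfold binDigit
  congr 1
  have h : ((m:ℝ) + α) * 2 ^ (n+1) = α * 2 ^ (n+1) + ((m * 2 ^ (n+1) : ℤ) : ℝ) := by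
    push_cast; ring
  rw [h, Int.floor_add_intCast]
  obtain ⟨j, hj⟩ : (2:ℤ) ∣ m * 2 ^ (n+1) := ⟨m * 2 ^ n, by ring⟩
  rw [hj]
  have : (⌊α * 2 ^ (n+1)⌋ + 2 * j) % 2 = ⌊α * 2 ^ (n+1)⌋ % 2 := by omega
  rw [this]

theorem badX_null (G : List Bool → Option Bool) :
    volume {α : ℝ | BadX G (binDigit α)} = 0 := by
  set B₀ := {α : ℝ | α ∈ Set.Ico (0:ℝ) 1 ∧ BadX G (binDigit α)} with hB₀
  have hcov : {α : ℝ | BadX G (binDigit α)} ⊆ ⋃ m : ℤ, (m:ℝ) +ᵥ B₀ := by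
    intro α hα
    simp only [Set.mem_iUnion]
    refine ⟨⌊α⌋, ?_⟩
    rw [Set.mem_vadd_set_iff_neg_vadd_mem]
    constructor
    · constructor
      · simp [neg_add_eq_sub, sub_nonneg, Int.floor_le]
      · simp only [vadd_eq_add, neg_add_eq_sub]
        have := Int.lt_floor_add_one α
        linarith
    · show BadX G (binDigit (-(⌊α⌋:ℝ) + α))
      have : (-(⌊α⌋:ℝ)) + α = ((-⌊α⌋ : ℤ) : ℝ) + α := by push_cast; ring
      rw [this]
      have hd : binDigit (((-⌊α⌋ : ℤ) : ℝ) + α) = binDigit α := by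
        funext n; exact binDigit_intCast_add _ _ _
      rw [hd]
      exact hα
  refine measure_mono_null hcov ?_
  refine measure_iUnion_null fun m => ?_
  rw [measure_vadd]
  exact badX_null_Ico G

open scoped Classical in
noncomputable def totalize (F : List Bool →. Option Bool) : List Bool → Option Bool :=
  fun x => if h : (F x).Dom then (F x).get h else none

theorem badX_of_SP {F : List Bool →. Option Bool} {X : ℕ → Bool}
    (hdom : ∀ n, (F (pre X n)).Dom)
    (hcor : ∀ n b, some b ∈ F (pre X n) → b = X n)
    (hinf : {n : ℕ | ∃ b, some b ∈ F (pre X n)}.Infinite) :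
    BadX (totalize F) X := by
  constructor
  · intro n b hG
    apply hcor n b
    unfold totalize at hG
    rw [dif_pos (hdom n)] at hG
    rw [← hG]
    exact Part.get_mem (hdom n)
  · apply hinf.mono
    intro n ⟨b, hb⟩
    show (totalize F (pre X n)).isSome
    unfold totalize
    rw [dif_pos (hdom n)]
    rw [Part.get_eq_of_mem hb (hdom n)]
    rfl

theorem partrec_countable : {F : List Bool →. Option Bool | Partrec F}.Countable := by
  rw [Set.countable_iff_exists_injective]
  classical
  have hcode : ∀ F : {F : List Bool →. Option Bool | Partrec F}, ∃ c : Nat.Partrec.Code,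
      c.eval = fun n => Part.bind (Encodable.decode (α := List Bool) n) fun a =>
        (F.1 a).map Encodable.encode :=
    fun F => Nat.Partrec.Code.exists_code.mp F.2
  choose code hc using hcode
  refine ⟨fun F => Encodable.encode (code F), fun F₁ F₂ h => ?_⟩
  simp only [funext_iff] at h
  have hcodeeq : code F₁ = code F₂ := Encodable.encode_injective h
  have heval : ∀ x : List Bool, (F₁.1 x).map Encodable.encode = (F₂.1 x).map Encodable.encode := by
    intro x
    have e1 := congrFun (hc F₁) (Encodable.encode x)
    have e2 := congrFun (hc F₂) (Encodable.encode x)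
    rw [hcodeeq] at e1
    rw [e1] at e2
    simpa [Encodable.encodek] using e2
  apply Subtype.ext
  funext x
  apply Part.ext
  intro a
  constructor
  · intro ha
    have : Encodable.encode a ∈ (F₂.1 x).map Encodable.encode := by
      rw [← heval x]; exact Part.mem_map _ ha
    obtain ⟨a', ha', he⟩ := Part.mem_map_iff _ |>.mp this
    rwa [Encodable.encode_injective he] at ha'
  · intro ha
    have : Encodable.encode a ∈ (F₁.1 x).map Encodable.encode := by
      rw [heval x]; exact Part.mem_map _ ha
    obtain ⟨a', ha', he⟩ := Part.mem_map_iff _ |>.mp this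
    rwa [Encodable.encode_injective he] at ha'

theorem SP_null : volume {α : ℝ | StronglyPredictable (binDigit α)} = 0 := by
  have hsub : {α : ℝ | StronglyPredictable (binDigit α)} ⊆
      ⋃ F ∈ {F : List Bool →. Option Bool | Partrec F}, {α : ℝ | BadX (totalize F) (binDigit α)} := by
    intro α hα
    obtain ⟨F, hF, hdom, hcor, hinf⟩ := hα
    simp only [Set.mem_iUnion]
    exact ⟨F, hF, badX_of_SP hdom hcor hinf⟩
  refine measure_mono_null hsub ?_
  rw [measure_biUnion_null_iff partrec_countable]
  exact fun F _ => badX_null (totalize F)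


theorem computableReal_unique {T₁ T₂ : ℝ} {f : ℕ → ℚ}
    (h1 : ∀ n : ℕ, |T₁ - (f n : ℝ)| < (2 : ℝ) ^ (-(n : ℤ)))
    (h2 : ∀ n : ℕ, |T₂ - (f n : ℝ)| < (2 : ℝ) ^ (-(n : ℤ))) : T₁ = T₂ := by
  by_contra hne
  have hpos : 0 < |T₁ - T₂| := abs_pos.mpr (sub_ne_zero.mpr hne)
  obtain ⟨n, hn⟩ := exists_pow_lt_of_lt_one (by linarith : (0:ℝ) < |T₁ - T₂| / 2)
    (by norm_num : (1:ℝ)/2 < 1)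
  have hpow : (2:ℝ) ^ (-(n:ℤ)) = (1/2) ^ n := by
    rw [zpow_neg, one_div, inv_pow]
    norm_cast
  have := abs_sub_abs_le_abs_sub T₁ T₂
  have htri : |T₁ - T₂| ≤ |T₁ - f n| + |T₂ - f n| := by
    have : T₁ - T₂ = (T₁ - f n) - (T₂ - f n) := by ring
    rw [this]
    exact abs_sub _ _
  have := h1 n
  have := h2 n
  rw [hpow] at *
  linarith

theorem computable_countable : {T : ℝ | ComputableReal T}.Countable := by
  rw [Set.countable_iff_exists_injective]
  classical
  have hex : ∀ T : {T : ℝ | ComputableReal T}, ∃ p : (ℕ → ℚ) × Nat.Partrec.Code,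
      (∀ n : ℕ, |T.1 - (p.1 n : ℝ)| < (2 : ℝ) ^ (-(n : ℤ))) ∧
      p.2.eval = fun n => Part.bind (Encodable.decode (α := ℕ) n) fun a =>
        (Part.some (p.1 a)).map (@Encodable.encode ℚ Primcodable.toEncodable) := by
    rintro ⟨T, f, hf, happ⟩
    obtain ⟨c, hc⟩ := Nat.Partrec.Code.exists_code.mp hf
    exact ⟨(f, c), happ, hc⟩
  choose p hp using hex
  refine ⟨fun T => Encodable.encode (p T).2, fun T₁ T₂ h => ?_⟩
  have hceq : (p T₁).2 = (p T₂).2 := Encodable.encode_injective h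
  have hfeq : (p T₁).1 = (p T₂).1 := by
    funext n
    have e1 := congrFun ((hp T₁).2) (Encodable.encode n)
    have e2 := congrFun ((hp T₂).2) (Encodable.encode n)
    rw [hceq] at e1
    rw [e1] at e2
    simp only [Encodable.encodek] at e2
    have e3 : (p T₁).1 n = (p T₂).1 n := by simpa [Part.map_some] using e2
    exact e3
  apply Subtype.ext
  exact computableReal_unique (hp T₁).1 (hfeq ▸ (hp T₂).1)


noncomputable instance finLen (n : ℕ) : Fintype {p : List Bool // p.length = n} :=
  Fintype.ofEquiv (List.Vector Bool n) (Equiv.refl _)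

theorem card_len (n : ℕ) : Fintype.card {p : List Bool // p.length = n} = 2 ^ n := by
  have : Fintype.card {p : List Bool // p.length = n} = Fintype.card (List.Vector Bool n) :=
    Fintype.card_congr (Equiv.refl _)
  rw [this, card_vector, Fintype.card_bool]

theorem summable_exp_len {T : ℝ} (hT0 : 0 < T) (hT1 : T < 1) :
    Summable (fun p : List Bool => (2:ℝ) ^ (-(p.length : ℝ) / T)) := by
  set f : List Bool → ℝ := fun p => (2:ℝ) ^ (-(p.length : ℝ) / T) with hf
  rw [← (Equiv.sigmaFiberEquiv (List.length : List Bool → ℕ)).summable_iff]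
  set g := f ∘ (Equiv.sigmaFiberEquiv (List.length : List Bool → ℕ)) with hg
  have hgval : ∀ x : Σ n : ℕ, {p : List Bool // p.length = n},
      g x = (2:ℝ) ^ (-(x.1 : ℝ) / T) := by
    rintro ⟨n, p, hp⟩
    simp only [hg, hf, Function.comp, Equiv.sigmaFiberEquiv]
    simp [hp]
  have hnonneg : ∀ x, 0 ≤ g x := by
    intro x; rw [hgval]; positivity
  rw [summable_sigma_of_nonneg hnonneg]
  constructor
  · intro n
    exact Summable.of_finite
  · have hfib : ∀ n : ℕ, (∑' p : {p : List Bool // p.length = n}, g ⟨n, p⟩)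
        = ((2:ℝ) ^ ((1 : ℝ) - 1/T)) ^ n := by
      intro n
      have h1 : (∑' p : {p : List Bool // p.length = n}, g ⟨n, p⟩)
          = ∑' _ : {p : List Bool // p.length = n}, (2:ℝ) ^ (-(n : ℝ) / T) := by
        apply tsum_congr; intro p; rw [hgval]
      rw [h1, tsum_const]
      rw [Nat.card_eq_fintype_card, card_len n, nsmul_eq_mul]
      have h2 : ((2:ℝ) ^ n : ℝ) = (2:ℝ) ^ (n : ℝ) := by
        rw [Real.rpow_natCast]
      push_cast
      rw [h2, ← Real.rpow_add (by norm_num : (0:ℝ) < 2)]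
      rw [← Real.rpow_natCast ((2:ℝ) ^ ((1:ℝ) - 1/T)) n, ← Real.rpow_mul (by norm_num)]
      congr 1
      field_simp
      ring
    have : Summable (fun n : ℕ => ((2:ℝ) ^ ((1 : ℝ) - 1/T)) ^ n) := by
      apply summable_geometric_of_lt_one
      · positivity
      · rw [show (1:ℝ) - 1/T = -(1/T - 1) by ring]
        apply Real.rpow_lt_one_of_one_lt_of_neg (by norm_num)
        have : 1 < 1/T := by rw [lt_div_iff₀ hT0]; linarith
        linarith
    apply Summable.congr this
    intro n
    rw [hfib]


/-- the toy machine outputting x on input [true] -/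
def toyM (x : List Bool) : List Bool →. List Bool :=
  fun p => ((bif decide (p = [true]) then some x else none : Option (List Bool)) : Part (List Bool))

theorem toyM_partrec (x : List Bool) : Partrec (toyM x) := by
  apply Computable.ofOption
  exact Computable.cond
    ((Primrec.eq.comp Primrec.id (Primrec.const [true])).decide.to_comp)
    (Computable.const (some x)) (Computable.const none)

theorem toyM_dom {x p : List Bool} (h : ((toyM x) p).Dom) : p = [true] := by
  by_contra hne
  unfold toyM at h
  rw [decide_eq_false hne] at h
  simp at h

theorem toyM_prefixFree (x : List Bool) : IsPrefixFreeMachine (toyM x) := by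
  refine ⟨toyM_partrec x, fun p q hp hq _ => ?_⟩
  rw [toyM_dom hp, toyM_dom hq]

theorem toyM_true (x : List Bool) : (toyM x) [true] = Part.some x := by
  unfold toyM
  simp

/-- there is a program of length ≥ 1 in the domain of an optimal machine -/
theorem exists_long_program {U : List Bool →. List Bool} (hU : IsOptimalMachine U) :
    ∃ q : List Bool, (U q).Dom ∧ 1 ≤ q.length := by
  obtain ⟨d₁, h₁⟩ := hU.2 (toyM []) (toyM_prefixFree [])
  obtain ⟨d₂, h₂⟩ := hU.2 (toyM [true]) (toyM_prefixFree [true])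
  obtain ⟨q₁, _, hq₁⟩ := h₁ [true] (by rw [toyM_true]; trivial)
  obtain ⟨q₂, _, hq₂⟩ := h₂ [true] (by rw [toyM_true]; trivial)
  rw [toyM_true] at hq₁ hq₂
  have hd₁ : (U q₁).Dom := by rw [hq₁]; trivial
  have hd₂ : (U q₂).Dom := by rw [hq₂]; trivial
  refine ⟨q₁, hd₁, ?_⟩
  by_contra hlen
  have hq₁nil : q₁ = [] := by
    rcases q₁ with _ | ⟨a, t⟩
    · rfl
    · simp at hlen
  have : q₁ = q₂ := hU.1.2 q₁ q₂ hd₁ hd₂ (by rw [hq₁nil]; exact List.nil_prefix)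
  rw [this, hq₂] at hq₁
  have : ([] : List Bool) = [true] := by
    have := Part.some_injective hq₁.symm
    exact this
  simp at this


theorem summable_ZT (U : List Bool →. List Bool) {T : ℝ} (hT0 : 0 < T) (hT1 : T < 1) :
    Summable (fun p : {p : List Bool // (U p).Dom} => (2:ℝ) ^ (-(p.1.length : ℝ) / T)) :=
  (summable_exp_len hT0 hT1).subtype _

/-- exp-form auxiliary function -/
noncomputable def hfun (n₀ : ℕ) (t : ℝ) : ℝ := Real.exp (Real.log 2 * (-(n₀ : ℝ) / t))

theorem hfun_eq {n₀ : ℕ} {t : ℝ} (ht : 0 < t) : hfun n₀ t = (2:ℝ) ^ (-(n₀ : ℝ) / t) := by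
  rw [Real.rpow_def_of_pos (by norm_num : (0:ℝ) < 2), hfun]

theorem hfun_hasDeriv {n₀ : ℕ} {t : ℝ} (ht : 0 < t) :
    HasDerivAt (hfun n₀) (hfun n₀ t * (Real.log 2 * (n₀ : ℝ) * (t ^ 2)⁻¹)) t := by
  have hinner : HasDerivAt (fun t : ℝ => Real.log 2 * (-(n₀ : ℝ) / t))
      (Real.log 2 * (n₀ : ℝ) * (t ^ 2)⁻¹) t := by
    have h1 : HasDerivAt (fun t : ℝ => t⁻¹) (-(t ^ 2)⁻¹) t := hasDerivAt_inv (ne_of_gt ht)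
    have h2 := h1.const_mul (Real.log 2 * -(n₀ : ℝ))
    have heq : (fun t : ℝ => Real.log 2 * -(n₀:ℝ) * t⁻¹) = fun t : ℝ => Real.log 2 * (-(n₀ : ℝ) / t) := by
      funext s; rw [div_eq_mul_inv]; ring
    rw [heq] at h2
    refine h2.congr_deriv ?_
    ring
  exact hinner.exp

/-- mean value bound: on [a,b] ⊂ (0,1), hfun grows at rate ≥ c -/
theorem hfun_slope {n₀ : ℕ} {a b T₁ T₂ : ℝ} (ha : 0 < a) (hb : b ≤ 1)
    (hT₁ : T₁ ∈ Set.Icc a b) (hT₂ : T₂ ∈ Set.Icc a b) (hlt : T₁ < T₂) :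
    Real.log 2 * (n₀ : ℝ) * (2:ℝ) ^ (-(n₀ : ℝ) / a) * (T₂ - T₁) ≤ hfun n₀ T₂ - hfun n₀ T₁ := by
  have hT₁0 : 0 < T₁ := lt_of_lt_of_le ha hT₁.1
  obtain ⟨ξ, hξ, hslope⟩ := exists_hasDerivAt_eq_slope (hfun n₀)
    (fun t => hfun n₀ t * (Real.log 2 * (n₀ : ℝ) * (t ^ 2)⁻¹)) hlt
    (by
      apply Continuous.comp_continuousOn Real.continuous_exp
      apply ContinuousOn.mul continuousOn_const
      apply ContinuousOn.div continuousOn_const continuousOn_id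
      intro t ht
      have : 0 < t := lt_of_lt_of_le hT₁0 ht.1
      exact ne_of_gt this)
    (fun t ht => hfun_hasDeriv (lt_trans hT₁0 ht.1))
  have hξ0 : 0 < ξ := lt_trans hT₁0 hξ.1
  have hξa : a ≤ ξ := le_trans hT₁.1 (le_of_lt hξ.1)
  have hξb : ξ ≤ 1 := le_trans (le_of_lt hξ.2) (le_trans hT₂.2 hb)
  -- bound the derivative from below at ξ
  have hder_lb : Real.log 2 * (n₀ : ℝ) * (2:ℝ) ^ (-(n₀ : ℝ) / a) ≤
      hfun n₀ ξ * (Real.log 2 * (n₀ : ℝ) * (ξ ^ 2)⁻¹) := by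
    have hl2 : 0 < Real.log 2 := Real.log_pos (by norm_num)
    have hinv : 1 ≤ (ξ ^ 2)⁻¹ := by
      have h2 : ξ ^ 2 ≤ 1 := by nlinarith
      have h3 : 0 < ξ ^ 2 := by positivity
      nlinarith [inv_pos.mpr h3, mul_inv_cancel₀ (ne_of_gt h3)]
    have hexp : (2:ℝ) ^ (-(n₀ : ℝ) / a) ≤ hfun n₀ ξ := by
      rw [hfun_eq hξ0]
      apply Real.rpow_le_rpow_of_exponent_le (by norm_num)
      rw [neg_div, neg_div, neg_le_neg_iff]
      apply div_le_div_of_nonneg_left (Nat.cast_nonneg n₀) ha hξa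
    calc Real.log 2 * (n₀ : ℝ) * (2:ℝ) ^ (-(n₀ : ℝ) / a)
        ≤ Real.log 2 * (n₀ : ℝ) * hfun n₀ ξ := by
          apply mul_le_mul_of_nonneg_left hexp
          positivity
    _ ≤ (Real.log 2 * (n₀ : ℝ) * hfun n₀ ξ) * (ξ ^ 2)⁻¹ := by
          have hh : 0 < hfun n₀ ξ := Real.exp_pos _
          exact le_mul_of_one_le_right
            (mul_nonneg (mul_nonneg hl2.le (Nat.cast_nonneg _)) hh.le) hinv
    _ = hfun n₀ ξ * (Real.log 2 * (n₀ : ℝ) * (ξ ^ 2)⁻¹) := by ring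
  have hslope' : hfun n₀ T₂ - hfun n₀ T₁ = hfun n₀ ξ * (Real.log 2 * (n₀:ℝ) * (ξ ^ 2)⁻¹) * (T₂ - T₁) := by
    rw [hslope]
    have hne : T₂ - T₁ ≠ 0 := by linarith
    field_simp
  rw [hslope']
  apply mul_le_mul_of_nonneg_right hder_lb
  linarith

/-- main monotonicity bound for ZT -/
theorem ZT_slope {U : List Bool →. List Bool} {n₀ : ℕ} {p₀ : List Bool}
    (hp₀ : (U p₀).Dom) (hlen : p₀.length = n₀)
    {a b T₁ T₂ : ℝ} (ha : 0 < a) (hb : b < 1)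
    (hT₁ : T₁ ∈ Set.Icc a b) (hT₂ : T₂ ∈ Set.Icc a b) (hle : T₁ ≤ T₂) :
    Real.log 2 * (n₀ : ℝ) * (2:ℝ) ^ (-(n₀ : ℝ) / a) * (T₂ - T₁) ≤ ZT U T₂ - ZT U T₁ := by
  rcases eq_or_lt_of_le hle with rfl | hlt
  · simp
  have hab : a ≤ b := le_trans hT₁.1 hT₁.2
  have hT₁0 : 0 < T₁ := lt_of_lt_of_le ha hT₁.1
  have hT₂0 : 0 < T₂ := lt_of_lt_of_le ha hT₂.1
  have hT₁1 : T₁ < 1 := lt_of_le_of_lt hT₁.2 hb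
  have hT₂1 : T₂ < 1 := lt_of_le_of_lt hT₂.2 hb
  have hs₁ := summable_ZT U hT₁0 hT₁1
  have hs₂ := summable_ZT U hT₂0 hT₂1
  have hdiff : ZT U T₂ - ZT U T₁ =
      ∑' p : {p : List Bool // (U p).Dom},
        ((2:ℝ) ^ (-(p.1.length : ℝ) / T₂) - (2:ℝ) ^ (-(p.1.length : ℝ) / T₁)) := by
    rw [ZT, ZT, ← Summable.tsum_sub hs₂ hs₁]
  rw [hdiff]
  have hterm : ∀ p : {p : List Bool // (U p).Dom},
      0 ≤ (2:ℝ) ^ (-(p.1.length : ℝ) / T₂) - (2:ℝ) ^ (-(p.1.length : ℝ) / T₁) := by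
    intro p
    rw [sub_nonneg]
    apply Real.rpow_le_rpow_of_exponent_le (by norm_num)
    rw [neg_div, neg_div, neg_le_neg_iff]
    apply div_le_div_of_nonneg_left (Nat.cast_nonneg _) hT₁0 hle
  have hsum : Summable (fun p : {p : List Bool // (U p).Dom} =>
      (2:ℝ) ^ (-(p.1.length : ℝ) / T₂) - (2:ℝ) ^ (-(p.1.length : ℝ) / T₁)) := hs₂.sub hs₁
  have hle₀ := Summable.le_tsum hsum ⟨p₀, hp₀⟩ (fun p _ => hterm p)
  have hp₀term : (2:ℝ) ^ (-((⟨p₀, hp₀⟩ : {p : List Bool // (U p).Dom}).1.length : ℝ) / T₂)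
      - (2:ℝ) ^ (-((⟨p₀, hp₀⟩ : {p : List Bool // (U p).Dom}).1.length : ℝ) / T₁)
      = hfun n₀ T₂ - hfun n₀ T₁ := by
    simp only [hlen]
    rw [hfun_eq hT₂0, hfun_eq hT₁0]
  rw [hp₀term] at hle₀
  exact le_trans (hfun_slope ha (le_of_lt hb) hT₁ hT₂ hlt) hle₀


/-- generic: if Z has slope ≥ c > 0 on Icc a b, preimages of null sets are null there -/
theorem null_preimage_of_slope (Z : ℝ → ℝ) {a b c : ℝ} (hc : 0 < c)
    (hslope : ∀ T₁ T₂, T₁ ∈ Set.Icc a b → T₂ ∈ Set.Icc a b → T₁ ≤ T₂ →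
      c * (T₂ - T₁) ≤ Z T₂ - Z T₁)
    {N : Set ℝ} (hN : volume N = 0) :
    volume {T | T ∈ Set.Icc a b ∧ Z T ∈ N} = 0 := by
  classical
  set s : Set ℝ := Z '' Set.Icc a b with hs
  set ψ : ℝ → ℝ := fun u => if h : ∃ T ∈ Set.Icc a b, Z T = u then h.choose else 0 with hψ
  have hinj : ∀ T₁ T₂, T₁ ∈ Set.Icc a b → T₂ ∈ Set.Icc a b → Z T₁ = Z T₂ → T₁ = T₂ := by
    intro T₁ T₂ h1 h2 he
    by_contra hne
    rcases lt_or_gt_of_ne hne with h | h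
    · have := hslope T₁ T₂ h1 h2 (le_of_lt h)
      nlinarith
    · have := hslope T₂ T₁ h2 h1 (le_of_lt h)
      nlinarith
  have hψZ : ∀ T ∈ Set.Icc a b, ψ (Z T) = T := by
    intro T hT
    have hex : ∃ T' ∈ Set.Icc a b, Z T' = Z T := ⟨T, hT, rfl⟩
    rw [hψ]
    simp only [dif_pos hex]
    obtain ⟨h1, h2⟩ := hex.choose_spec
    exact hinj _ _ h1 hT h2
  have hLip : LipschitzOnWith (Real.toNNReal c⁻¹) ψ s := by
    apply LipschitzOnWith.of_dist_le_mul
    rintro u ⟨T₁, hT₁, rfl⟩ v ⟨T₂, hT₂, rfl⟩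
    rw [hψZ _ hT₁, hψZ _ hT₂]
    rw [Real.coe_toNNReal _ (inv_nonneg.mpr (le_of_lt hc))]
    rw [Real.dist_eq, Real.dist_eq]
    rcases le_total T₁ T₂ with h | h
    · have hsl := hslope T₁ T₂ hT₁ hT₂ h
      have h0 : 0 ≤ c * (T₂ - T₁) := mul_nonneg hc.le (by linarith)
      have hkey := mul_le_mul_of_nonneg_left hsl (inv_nonneg.mpr hc.le)
      rw [← mul_assoc, inv_mul_cancel₀ (ne_of_gt hc), one_mul] at hkey
      rw [abs_of_nonpos (by linarith), abs_of_nonpos (by linarith)]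
      linarith
    · have hsl := hslope T₂ T₁ hT₂ hT₁ h
      have h0 : 0 ≤ c * (T₁ - T₂) := mul_nonneg hc.le (by linarith)
      have hkey := mul_le_mul_of_nonneg_left hsl (inv_nonneg.mpr hc.le)
      rw [← mul_assoc, inv_mul_cancel₀ (ne_of_gt hc), one_mul] at hkey
      rw [abs_of_nonneg (by linarith), abs_of_nonneg (by linarith)]
      linarith
  have hsub : {T | T ∈ Set.Icc a b ∧ Z T ∈ N} ⊆ ψ '' (N ∩ s) := by
    rintro T ⟨hT, hZT⟩
    exact ⟨Z T, ⟨hZT, ⟨T, hT, rfl⟩⟩, hψZ T hT⟩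
  apply measure_mono_null hsub
  have hLip' : LipschitzOnWith (Real.toNNReal c⁻¹) ψ (N ∩ s) :=
    hLip.mono Set.inter_subset_right
  have h0 : μH[1] (N ∩ s) = 0 := by
    rw [hausdorffMeasure_real]
    exact measure_mono_null Set.inter_subset_left hN
  have himg := hLip'.hausdorffMeasure_image_le (le_of_lt (one_pos (α := ℝ)))
  rw [← hausdorffMeasure_real]
  refine le_antisymm ?_ zero_le
  calc μH[1] (ψ '' (N ∩ s)) ≤ (Real.toNNReal c⁻¹ : ENNReal) ^ (1:ℝ) * μH[1] (N ∩ s) := himg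
  _ = 0 := by rw [h0, mul_zero]




end ZAux

theorem measure_not_computable_not_stronglyPredictable
    (U : List Bool →. List Bool) (hU : IsOptimalMachine U) :
    MeasureTheory.volume {T : ℝ | T ∈ Set.Ioo (0 : ℝ) 1 ∧ ¬ ComputableReal T ∧
      ¬ StronglyPredictable (fun n => binDigit (ZT U T) n)} = 1 := by
  classical
  open MeasureTheory in
  have hNnull : volume {α : ℝ | StronglyPredictable (binDigit α)} = 0 := ZAux.SP_null
  obtain ⟨p₀, hp₀dom, hp₀len⟩ := ZAux.exists_long_program hU
  have hBad2null : volume {T : ℝ | T ∈ Set.Ioo (0:ℝ) 1 ∧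
      ZT U T ∈ {α : ℝ | StronglyPredictable (binDigit α)}} = 0 := by
    have hcov : {T : ℝ | T ∈ Set.Ioo (0:ℝ) 1 ∧
        ZT U T ∈ {α : ℝ | StronglyPredictable (binDigit α)}} ⊆
        ⋃ k : ℕ, {T : ℝ | T ∈ Set.Icc (1/(k+2) : ℝ) (1 - 1/(k+2)) ∧
          ZT U T ∈ {α : ℝ | StronglyPredictable (binDigit α)}} := by
      rintro T ⟨⟨hT0, hT1⟩, hTN⟩
      have hε : 0 < min T (1 - T) := lt_min hT0 (by linarith)
      obtain ⟨k, hk⟩ := exists_nat_one_div_lt hε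
      simp only [Set.mem_iUnion]
      have h12 : (1:ℝ)/(k+2) ≤ 1/(k+1) := by
        apply one_div_le_one_div_of_le (by positivity)
        push_cast; linarith
      have hmT : min T (1 - T) ≤ T := min_le_left _ _
      have hmT' : min T (1 - T) ≤ 1 - T := min_le_right _ _
      exact ⟨k, ⟨by linarith, by linarith⟩, hTN⟩
    refine measure_mono_null hcov (measure_iUnion_null fun k => ?_)
    have hk2 : (0:ℝ) < 1/(k+2) := by positivity
    have hk3 : (1:ℝ) - 1/(k+2) < 1 := by linarith
    apply ZAux.null_preimage_of_slope (ZT U)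
      (c := Real.log 2 * (p₀.length : ℝ) * (2:ℝ) ^ (-(p₀.length:ℝ)/(1/(k+2))))
    · apply mul_pos (mul_pos (Real.log_pos (by norm_num)) ?_) (Real.rpow_pos_of_pos (by norm_num) _)
      exact_mod_cast Nat.lt_of_lt_of_le Nat.zero_lt_one hp₀len
    · intro T₁ T₂ h1 h2 hle
      exact ZAux.ZT_slope hp₀dom rfl hk2 hk3 h1 h2 hle
    · exact hNnull
  have hBad1null : volume {T : ℝ | ComputableReal T} = 0 :=
    ZAux.computable_countable.measure_zero _
  have hsetEq : {T : ℝ | T ∈ Set.Ioo (0 : ℝ) 1 ∧ ¬ ComputableReal T ∧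
      ¬ StronglyPredictable (fun n => binDigit (ZT U T) n)} =
      Set.Ioo (0:ℝ) 1 \ ({T : ℝ | ComputableReal T} ∪
        {T : ℝ | T ∈ Set.Ioo (0:ℝ) 1 ∧
          ZT U T ∈ {α : ℝ | StronglyPredictable (binDigit α)}}) := by
    ext T
    simp only [Set.mem_setOf_eq, Set.mem_diff, Set.mem_union]
    constructor
    · rintro ⟨hT, hC, hSP⟩
      refine ⟨hT, fun h => ?_⟩
      rcases h with h | h
      · exact hC h
      · exact hSP h.2
    · rintro ⟨hT, h⟩
      push_neg at h
      exact ⟨hT, h.1, fun hSP => h.2 hT hSP⟩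
  rw [hsetEq, measure_diff_null (measure_union_null hBad1null hBad2null)]
  rw [Real.volume_Ioo]
  norm_num
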